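/- arXiv:1907.04522 — 2 statements merged into one kernel-verified Lean document; each statement's English description precedes it below -/
import Mathlib

section
/- Let $v$ be a real place. The archimedean gamma matrix identity holds: for $\delta, \xi \in \{\pm 1\}$, the function $G(\underline s,\delta,\xi) := \frac{1}{2^{1/2}\cdot 4}\sum_{\eta \in \{\pm 1\}} \alpha(-\eta)\,\gamma(s_2, \delta\eta)\,\gamma(s_1+s_2-\tfrac{1}{2}, \eta\xi)$ equals the corresponding entry of $2^{1-s_1-2s_2}\pi^{\frac{1}{2}-s_1-2s_2}\Gamma(s_2)\Gamma(s_1+s_2-\tfrac{1}{2})\begin{pmatrix} \sin\pi(\frac{s_1}{2}+s_2) & \cos\frac{\pi s_1}{2} \\ \sin\frac{\pi s_1}{2} & \cos\pi(\frac{s_1}{2}+s_2)\end{pmatrix}$, where rows are indexed by $\delta = 1, -1$ and columns by $\xi = 1, -1$. -/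
open Complex

/-- The real local gamma factor: `γ(s, 1) = 2(2π)^{-s}Γ(s)e^{iπs/2}` and
`γ(s, -1) = 2(2π)^{-s}Γ(s)e^{-iπs/2}`, encoded uniformly for `ε = ±1`. -/
noncomputable def gammaR (s : ℂ) (ε : ℤ) : ℂ :=
  2 * (2 * (Real.pi : ℂ)) ^ (-s) * Complex.Gamma s *
    Complex.exp ((ε : ℂ) * Real.pi * Complex.I * s / 2)

/-- The Weil constants `α(1) = e^{iπ/4}`, `α(-1) = e^{-iπ/4}` for the additive
character `e^{2πix}` of `ℝ`. -/
noncomputable def weilConst (ε : ℤ) : ℂ := Complex.exp ((ε : ℂ) * Real.pi * Complex.I / 4)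

/-- `G(s,δ,ξ) = (1/(2^{1/2}·4)) ∑_{η=±1} α(-η) γ(s₂,δη) γ(s₁+s₂-1/2,ηξ)`. -/
noncomputable def Gfac (s₁ s₂ : ℂ) (δ ξ : ℤ) : ℂ :=
  (1 / ((Real.sqrt 2 : ℂ) * 4)) * ∑ η ∈ ({1, -1} : Finset ℤ),
    weilConst (-η) * gammaR s₂ (δ * η) * gammaR (s₁ + s₂ - 1 / 2) (η * ξ)

/-! The two terms of the sum over `η = ±1` are `e^{±iθ}` times a common factor, with
`θ = π(δ s₂ + ξ (s₁ + s₂ - 1/2))/2 - π/4` (the Weil constant contributes the `-π/4`), so `G(s,δ,ξ)`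
is that factor times `2 cos θ`. For `δ, ξ = ±1` the angle `θ` is `±π s₁/2`, `±π(s₁/2 + s₂)`, or one
of these minus `π/2`, which turns the cosine into the sine. -/

lemma weilConst_neg_mul_gammaR_mul_gammaR (s w : ℂ) (δ η ξ : ℤ) :
    weilConst (-η) * gammaR s (δ * η) * gammaR w (η * ξ) =
      4 * ((2 * Real.pi : ℂ) ^ (-s) * (2 * Real.pi : ℂ) ^ (-w)) * Gamma s * Gamma w *
        exp (η * (Real.pi * (δ * s + ξ * w) / 2 - Real.pi / 4) * I) := by
  have hexp : exp (η * (Real.pi * (δ * s + ξ * w) / 2 - Real.pi / 4) * I) =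
      exp ((-η : ℤ) * Real.pi * I / 4) * exp ((δ * η : ℤ) * Real.pi * I * s / 2) *
        exp ((η * ξ : ℤ) * Real.pi * I * w / 2) := by
    rw [← exp_add, ← exp_add]
    push_cast
    ring_nf
  rw [hexp, weilConst, gammaR, gammaR]
  ring

lemma sum_weilConst_neg_mul_gammaR_mul_gammaR (s w : ℂ) (δ ξ : ℤ) :
    ∑ η ∈ ({1, -1} : Finset ℤ), weilConst (-η) * gammaR s (δ * η) * gammaR w (η * ξ) =
      8 * ((2 * Real.pi : ℂ) ^ (-s) * (2 * Real.pi : ℂ) ^ (-w)) * Gamma s * Gamma w *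
        cos (Real.pi * (δ * s + ξ * w) / 2 - Real.pi / 4) := by
  rw [Finset.sum_pair (by decide), weilConst_neg_mul_gammaR_mul_gammaR,
    weilConst_neg_mul_gammaR_mul_gammaR]
  push_cast
  rw [one_mul, neg_one_mul, ← mul_add, ← two_cos]
  ring

lemma sqrt_two_mul_two_mul_pi_cpow (a : ℂ) :
    (Real.sqrt 2 : ℂ) * (2 * Real.pi : ℂ) ^ a = 2 ^ (a + 1 / 2) * (Real.pi : ℂ) ^ a := by
  have hsqrt : (Real.sqrt 2 : ℂ) = 2 ^ ((1 : ℂ) / 2) := by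
    rw [Real.sqrt_eq_rpow, ofReal_cpow zero_le_two]
    norm_num
  have hmul := mul_cpow_ofReal_nonneg zero_le_two Real.pi_pos.le a
  push_cast at hmul
  rw [hmul, hsqrt, cpow_add _ _ two_ne_zero]
  ring

lemma Gfac_eq_mul_cos (s₁ s₂ : ℂ) (δ ξ : ℤ) :
    Gfac s₁ s₂ δ ξ = (2 : ℂ) ^ (1 - s₁ - 2 * s₂) * (Real.pi : ℂ) ^ ((1 : ℂ) / 2 - s₁ - 2 * s₂) *
      Gamma s₂ * Gamma (s₁ + s₂ - 1 / 2) *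
      cos (Real.pi * (δ * s₂ + ξ * (s₁ + s₂ - 1 / 2)) / 2 - Real.pi / 4) := by
  have h2pi : (2 * Real.pi : ℂ) ≠ 0 := mul_ne_zero two_ne_zero (ofReal_ne_zero.mpr Real.pi_ne_zero)
  have hconst : 1 / ((Real.sqrt 2 : ℂ) * 4) = Real.sqrt 2 / 8 := by
    have hsqrt : (Real.sqrt 2 : ℂ) ^ 2 = 2 := by
      rw [← ofReal_pow, Real.sq_sqrt zero_le_two]
      norm_num
    have hsqrt0 : (Real.sqrt 2 : ℂ) ≠ 0 := ofReal_ne_zero.mpr (by positivity)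
    field_simp
    linear_combination -4 * hsqrt
  rw [Gfac, sum_weilConst_neg_mul_gammaR_mul_gammaR, ← cpow_add _ _ h2pi,
    show -s₂ + -(s₁ + s₂ - 1 / 2) = (1 : ℂ) / 2 - s₁ - 2 * s₂ by ring,
    show (1 : ℂ) - s₁ - 2 * s₂ = 1 / 2 - s₁ - 2 * s₂ + 1 / 2 by ring,
    ← sqrt_two_mul_two_mul_pi_cpow, hconst]
  ring

/-- the archimedean gamma-matrix identity (formula (2.10) of the paper):
the matrix `(G(s,δ,ξ))_{δ,ξ=±1}` equals
`2^{1-s₁-2s₂} π^{1/2-s₁-2s₂} Γ(s₂) Γ(s₁+s₂-1/2)`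
times `[[sin π(s₁/2+s₂), cos(πs₁/2)], [sin(πs₁/2), cos π(s₁/2+s₂)]]`. -/
theorem stmt_3 (s₁ s₂ : ℂ) :
    let C : ℂ := (2 : ℂ) ^ (1 - s₁ - 2 * s₂) * (Real.pi : ℂ) ^ ((1 : ℂ) / 2 - s₁ - 2 * s₂) *
      Complex.Gamma s₂ * Complex.Gamma (s₁ + s₂ - 1 / 2)
    Gfac s₁ s₂ 1 1 = C * Complex.sin (Real.pi * (s₁ / 2 + s₂)) ∧
    Gfac s₁ s₂ 1 (-1) = C * Complex.cos (Real.pi * s₁ / 2) ∧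
    Gfac s₁ s₂ (-1) 1 = C * Complex.sin (Real.pi * s₁ / 2) ∧
    Gfac s₁ s₂ (-1) (-1) = C * Complex.cos (Real.pi * (s₁ / 2 + s₂)) := by
  intro C
  refine ⟨?_, ?_, ?_, ?_⟩ <;> rw [Gfac_eq_mul_cos] <;> push_cast <;> congr 1
  · rw [← cos_sub_pi_div_two]; ring_nf
  · rw [← cos_neg]; ring_nf
  · rw [← cos_sub_pi_div_two]; ring_nf
  · rw [← cos_neg]; ring_nf
end

section
/- Let $\phi : \mathbb{R} \to \mathbb{C}$ be a Schwartz function and $0 < t_2$. Then: (a) for $|a| \leq M$, $\int_{\mathbb{R}}|\phi(y+a)||y|^{t_2-1}dy \ll_{\phi,M,t_2} 1$; (b) for $|a| \geq M > 0$, $\int_{\mathbb{R}}|\phi(y+a)||y|^{t_2-1}dy \ll_{\phi,M}1 + |a|^{t_2-1/2}$ if $t_2 \geq 1$, and $\ll_{\phi,M} 1 + |a|^{t_2/2}$ if $0 < t_2 \leq 1$. Consequently, for Schwartz functions $\phi_1,\phi_2,\phi_3$ on $\mathbb{R}$ and real $t_1 > 1/2$, $t_2 > 0$ with $t_1 + t_2/2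 > 1$, the integral $\int_{\mathbb{R}^3}|x_1|^{t_1-1}|x_{12}^2 - x_1x_2|^{t_2-1}|\phi_1(x_1)\phi_2(x_{12})\phi_3(x_2)|\,dx_1\,dx_{12}\,dx_2$ is finite. -/
/-! For `s > -1` and `p = max s 0`, split
`|y|^s ≤ 𝟙_{[-1,1]}(y) |y|^s + 2^p (|y + a|^p + |a|^p)`: the first piece is integrable against the
bounded `φ (y + a)`, the second against the rapidly decreasing `φ (y + a)`, so
`∫ |φ (y + a)| |y|^s dy ≪ 1 + |a|^p`, which gives (a) and (b).

For the zeta integral fix `x₁ ≠ 0`: since `|x₁₂² - x₁ x₂| = |x₁| |x₂ - x₁₂² / x₁|`, the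
`x₂`-integral is the shifted integral with `a = x₁₂² / x₁`, hence
`≪ |x₁|^(t₂-1) (1 + |x₁₂|^(2p) |x₁|^(-p))`.
What remains is a sum of products of one-variable moments `∫ |φ x| |x|^r dx` of Schwartz
functions, finite because every exponent `r` exceeds `-1`. -/

open MeasureTheory Set Real

lemma integrableOn_abs_rpow_Icc {s : ℝ} (hs : -1 < s) :
    IntegrableOn (fun x : ℝ => |x| ^ s) (Icc (-1) 1) := by
  have h₀₁ : IntervalIntegrable (fun x : ℝ => |x| ^ s) volume 0 1 :=
    (intervalIntegral.intervalIntegrable_rpow' hs).congr fun x hx => by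
      rw [uIoc_of_le zero_le_one] at hx
      simp only [abs_of_pos hx.1]
  have hneg : IntervalIntegrable (fun x : ℝ => |x| ^ s) volume (-1) 0 := by
    simpa using ((IntervalIntegrable.iff_comp_neg).1 h₀₁).symm
  exact (intervalIntegrable_iff_integrableOn_Icc_of_le (by norm_num)).1 (hneg.trans h₀₁)

lemma abs_rpow_le_indicator_add {s q : ℝ} (hsq : s ≤ q) (x : ℝ) :
    |x| ^ s ≤ (Icc (-1) 1).indicator (fun x => |x| ^ s) x + |x| ^ q := by
  by_cases hx : x ∈ Icc (-1 : ℝ) 1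
  · rw [indicator_of_mem hx]
    exact le_add_of_nonneg_right (by positivity)
  · rw [mem_Icc, ← abs_le, not_le] at hx
    rw [indicator_of_notMem (by rwa [mem_Icc, ← abs_le, not_le]), zero_add]
    exact rpow_le_rpow_of_exponent_le hx.le hsq

lemma abs_rpow_le_two_rpow_mul_add {p : ℝ} (hp : 0 ≤ p) (y a : ℝ) :
    |y| ^ p ≤ 2 ^ p * (|y + a| ^ p + |a| ^ p) := by
  have hy : |y| ≤ 2 * max |y + a| |a| := by
    have := abs_sub (y + a) a
    rw [add_sub_cancel_right] at this
    linarith [le_max_left |y + a| |a|, le_max_right |y + a| |a|]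
  calc |y| ^ p ≤ (2 * max |y + a| |a|) ^ p := by gcongr
    _ = 2 ^ p * max |y + a| |a| ^ p := mul_rpow (by norm_num) (by positivity)
    _ ≤ 2 ^ p * (|y + a| ^ p + |a| ^ p) := by
      gcongr
      rcases max_cases |y + a| |a| with ⟨h, -⟩ | ⟨h, -⟩ <;> rw [h]
      · exact le_add_of_nonneg_right (by positivity)
      · exact le_add_of_nonneg_left (by positivity)

lemma mul_abs_rpow_le_indicator_add {u B s : ℝ} (hu : 0 ≤ u) (huB : u ≤ B) (y a : ℝ) :
    u * |y| ^ s ≤ B * (Icc (-1) 1).indicator (fun x => |x| ^ s) y +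
      2 ^ max s 0 * (u * |y + a| ^ max s 0 + |a| ^ max s 0 * u) := by
  have hind : 0 ≤ (Icc (-1) 1).indicator (fun x => |x| ^ s) y :=
    indicator_nonneg (fun _ _ => by positivity) y
  have hpow := (abs_rpow_le_indicator_add (le_max_left s 0) y).trans
    (add_le_add_right (abs_rpow_le_two_rpow_mul_add (le_max_right s 0) y a) _)
  calc u * |y| ^ s
      ≤ u * (Icc (-1) 1).indicator (fun x => |x| ^ s) y +
          2 ^ max s 0 * (u * |y + a| ^ max s 0 + |a| ^ max s 0 * u) := by
        nlinarith [mul_le_mul_of_nonneg_left hpow hu]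
    _ ≤ _ := by gcongr

lemma abs_sq_sub_mul_eq {u v x : ℝ} (hu : u ≠ 0) : |v ^ 2 - u * x| = |u| * |x - v ^ 2 / u| := by
  rw [← abs_mul, abs_sub_comm, mul_sub, mul_div_cancel₀ _ hu]

lemma abs_rpow_mul_abs_sq_div_rpow {u : ℝ} (hu : u ≠ 0) (v r p : ℝ) :
    |u| ^ r * |v ^ 2 / u| ^ p = |u| ^ (r - p) * |v| ^ (2 * p) := by
  have hu' : 0 < |u| := abs_pos.2 hu
  rw [abs_div, div_rpow (by positivity) hu'.le, rpow_sub hu', abs_pow, rpow_mul (abs_nonneg v),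
    ← rpow_natCast]
  push_cast
  ring

lemma integrable_prod_prod_of_ae_lintegral_le {α β γ : Type*} [MeasurableSpace α]
    [MeasurableSpace β] [MeasurableSpace γ] {μ : Measure α} {ν : Measure β} {ρ : Measure γ}
    [SFinite ν] [SFinite ρ] {f : α × β × γ → ℝ} (hf : AEStronglyMeasurable f (μ.prod (ν.prod ρ)))
    (hf₀ : 0 ≤ᵐ[μ.prod (ν.prod ρ)] f) {H : α × β → ℝ} (hH : Integrable H (μ.prod ν))
    (hfH : ∀ᵐ z ∂μ.prod ν, ∫⁻ x, ENNReal.ofReal (f (z.1, z.2, x)) ∂ρ ≤ ENNReal.ofReal (H z)) :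
    Integrable f (μ.prod (ν.prod ρ)) := by
  refine ⟨hf, (hasFiniteIntegral_iff_ofReal hf₀).2 ?_⟩
  calc ∫⁻ x, ENNReal.ofReal (f x) ∂μ.prod (ν.prod ρ)
      = ∫⁻ z, ENNReal.ofReal (f (MeasurableEquiv.prodAssoc z)) ∂(μ.prod ν).prod ρ :=
        ((measurePreserving_prodAssoc μ ν ρ).lintegral_comp_emb
          (MeasurableEquiv.measurableEmbedding _) _).symm
    _ ≤ ∫⁻ z, ∫⁻ x, ENNReal.ofReal (f (z.1, z.2, x)) ∂ρ ∂μ.prod ν := lintegral_prod_le _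
    _ ≤ ∫⁻ z, ENNReal.ofReal (H z) ∂μ.prod ν := lintegral_mono_ae hfH
    _ < ⊤ := hH.lintegral_lt_top

namespace SchwartzMap

variable {F : Type*} [NormedAddCommGroup F] [NormedSpace ℝ F]

lemma integrable_norm_mul_abs_rpow (φ : 𝓢(ℝ, F)) {s : ℝ} (hs : -1 < s) :
    Integrable fun x => ‖φ x‖ * |x| ^ s := by
  set B := SchwartzMap.seminorm ℝ 0 0 φ
  set n := ⌈s⌉₊
  have hdom : Integrable fun x =>
      B * (Icc (-1) 1).indicator (fun x => |x| ^ s) x + ‖x‖ ^ n * ‖φ x‖ :=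
    (((integrableOn_abs_rpow_Icc hs).integrable_indicator measurableSet_Icc).const_mul B).add
      (φ.integrable_pow_mul volume n)
  refine hdom.mono' (φ.continuous.norm.measurable.mul (by fun_prop)).aestronglyMeasurable
    (ae_of_all _ fun x => ?_)
  have hind : 0 ≤ (Icc (-1) 1).indicator (fun x => |x| ^ s) x :=
    indicator_nonneg (fun _ _ => by positivity) x
  rw [norm_of_nonneg (by positivity)]
  calc ‖φ x‖ * |x| ^ s
      ≤ ‖φ x‖ * ((Icc (-1) 1).indicator (fun x => |x| ^ s) x + |x| ^ (n : ℝ)) := by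
        gcongr
        exact abs_rpow_le_indicator_add (Nat.le_ceil s) x
    _ ≤ B * (Icc (-1) 1).indicator (fun x => |x| ^ s) x + ‖x‖ ^ n * ‖φ x‖ := by
        rw [mul_add, rpow_natCast, ← Real.norm_eq_abs, mul_comm ‖φ x‖ (‖x‖ ^ n)]
        gcongr
        exact φ.norm_le_seminorm ℝ x

lemma exists_integral_norm_comp_add_mul_abs_rpow_le (φ : 𝓢(ℝ, F)) {s : ℝ} (hs : -1 < s) :
    ∃ C, 0 ≤ C ∧ ∀ a : ℝ, Integrable (fun y => ‖φ (y + a)‖ * |y| ^ s) ∧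
      ∫ y, ‖φ (y + a)‖ * |y| ^ s ≤ C * (1 + |a| ^ max s 0) := by
  set p := max s 0
  set B := SchwartzMap.seminorm ℝ 0 0 φ
  set ind := (Icc (-1 : ℝ) 1).indicator fun x => |x| ^ s
  have hind_nonneg : 0 ≤ ind := indicator_nonneg fun _ _ => by positivity
  have hind : Integrable ind :=
    (integrableOn_abs_rpow_Icc hs).integrable_indicator measurableSet_Icc
  have hJ := φ.integrable_norm_mul_abs_rpow (s := p) (by linarith [le_max_right s 0])
  have hL : Integrable fun x => ‖φ x‖ := φ.integrable.norm
  set K := ∫ x, ind x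
  set J := ∫ x, ‖φ x‖ * |x| ^ p
  set L := ∫ x, ‖φ x‖
  have hB : 0 ≤ B := apply_nonneg _ _
  have hK : 0 ≤ K := integral_nonneg hind_nonneg
  have hJ₀ : 0 ≤ J := integral_nonneg fun x => by positivity
  have hL₀ : 0 ≤ L := integral_nonneg fun x => by positivity
  refine ⟨B * K + 2 ^ p * (J + L), by positivity, fun a => ?_⟩
  have hJa := hJ.comp_add_right a
  have hLa := (hL.comp_add_right a).const_mul (|a| ^ p)
  have hsum : Integrable fun y => ‖φ (y + a)‖ * |y + a| ^ p + |a| ^ p * ‖φ (y + a)‖ :=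
    hJa.add hLa
  have hdom : Integrable fun y =>
      B * ind y + 2 ^ p * (‖φ (y + a)‖ * |y + a| ^ p + |a| ^ p * ‖φ (y + a)‖) :=
    (hind.const_mul B).add (hsum.const_mul _)
  have hle : ∀ y, ‖φ (y + a)‖ * |y| ^ s ≤
      B * ind y + 2 ^ p * (‖φ (y + a)‖ * |y + a| ^ p + |a| ^ p * ‖φ (y + a)‖) := fun y =>
    mul_abs_rpow_le_indicator_add (norm_nonneg _) (φ.norm_le_seminorm ℝ (y + a)) y a
  have hint : Integrable (fun y => ‖φ (y + a)‖ * |y| ^ s) :=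
    hdom.mono' ((φ.continuous.comp (continuous_add_const a)).norm.measurable.mul
      (by fun_prop)).aestronglyMeasurable
      (ae_of_all _ fun y => by rw [norm_of_nonneg (by positivity)]; exact hle y)
  refine ⟨hint, ?_⟩
  have hap : 0 ≤ |a| ^ p := by positivity
  calc ∫ y, ‖φ (y + a)‖ * |y| ^ s
      ≤ ∫ y, B * ind y + 2 ^ p * (‖φ (y + a)‖ * |y + a| ^ p + |a| ^ p * ‖φ (y + a)‖) :=
        integral_mono hint hdom hle
    _ = B * K + 2 ^ p * (J + |a| ^ p * L) := by
        rw [integral_add (hind.const_mul B) (hsum.const_mul _), integral_const_mul,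
          integral_const_mul, integral_add hJa hLa, integral_const_mul,
          integral_add_right_eq_self (fun x => ‖φ x‖ * |x| ^ p),
          integral_add_right_eq_self (fun x => ‖φ x‖)]
    _ ≤ (B * K + 2 ^ p * (J + L)) * (1 + |a| ^ p) := by
        have h2p : (0 : ℝ) ≤ 2 ^ p := by positivity
        nlinarith [mul_nonneg (mul_nonneg hB hK) hap, mul_nonneg (mul_nonneg h2p hJ₀) hap,
          mul_nonneg h2p hL₀]

lemma exists_integral_norm_comp_add_mul_abs_rpow_le_of_abs_le (φ : 𝓢(ℝ, F)) (M : ℝ) {t : ℝ}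
    (ht : 0 < t) : ∃ C, ∀ a : ℝ, |a| ≤ M → ∫ y, ‖φ (y + a)‖ * |y| ^ (t - 1) ≤ C := by
  obtain ⟨C, hC, hφ⟩ := φ.exists_integral_norm_comp_add_mul_abs_rpow_le (s := t - 1) (by linarith)
  refine ⟨C * (1 + |M| ^ max (t - 1) 0), fun a ha => (hφ a).2.trans ?_⟩
  have hpow : |a| ^ max (t - 1) 0 ≤ |M| ^ max (t - 1) 0 :=
    rpow_le_rpow (abs_nonneg a) (ha.trans (le_abs_self M)) (le_max_right _ _)
  gcongr

lemma exists_integral_norm_comp_add_mul_abs_rpow_le_of_le_abs (φ : 𝓢(ℝ, F)) {M t : ℝ}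
    (hM : 0 < M) (ht : 0 < t) :
    ∃ C, ∀ a : ℝ, M ≤ |a| → ∫ y, ‖φ (y + a)‖ * |y| ^ (t - 1) ≤ C * (1 + |a| ^ (t - 1 / 2)) := by
  obtain ⟨C, hC, hφ⟩ := φ.exists_integral_norm_comp_add_mul_abs_rpow_le (s := t - 1) (by linarith)
  set m := M ^ (-(1 / 2) : ℝ)
  refine ⟨C * (2 + m), fun a ha => (hφ a).2.trans ?_⟩
  have ha₀ : 0 < |a| := hM.trans_le ha
  have hm : 0 ≤ m := by positivity
  have hY : 0 ≤ |a| ^ (t - 1 / 2) := by positivity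
  have hX : |a| ^ max (t - 1) 0 ≤ 1 + m * |a| ^ (t - 1 / 2) := by
    rcases max_cases (t - 1) 0 with ⟨h, -⟩ | ⟨h, -⟩ <;> rw [h]
    · calc |a| ^ (t - 1) = |a| ^ (-(1 / 2) : ℝ) * |a| ^ (t - 1 / 2) := by
            rw [← rpow_add ha₀]; ring_nf
        _ ≤ m * |a| ^ (t - 1 / 2) := by
            gcongr
            exact rpow_le_rpow_of_nonpos hM ha (by norm_num)
        _ ≤ 1 + m * |a| ^ (t - 1 / 2) := le_add_of_nonneg_left zero_le_one
    · rw [rpow_zero]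
      exact le_add_of_nonneg_right (by positivity)
  rw [mul_assoc]
  gcongr
  nlinarith [mul_nonneg hm hY]

lemma exists_integral_norm_comp_add_mul_abs_rpow_le_of_le_one (φ : 𝓢(ℝ, F)) {t : ℝ}
    (ht₀ : 0 < t) (ht : t ≤ 1) :
    ∃ C, ∀ a : ℝ, ∫ y, ‖φ (y + a)‖ * |y| ^ (t - 1) ≤ C * (1 + |a| ^ (t / 2)) := by
  obtain ⟨C, hC, hφ⟩ := φ.exists_integral_norm_comp_add_mul_abs_rpow_le (s := t - 1) (by linarith)
  refine ⟨2 * C, fun a => (hφ a).2.trans ?_⟩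
  rw [max_eq_right (by linarith), rpow_zero]
  nlinarith [mul_nonneg hC (rpow_nonneg (abs_nonneg a) (t / 2))]

lemma exists_integral_abs_sq_sub_mul_rpow_mul_norm_le (φ : 𝓢(ℝ, F)) {s : ℝ} (hs : -1 < s) :
    ∃ C, 0 ≤ C ∧ ∀ u v : ℝ, u ≠ 0 → Integrable (fun x => |v ^ 2 - u * x| ^ s * ‖φ x‖) ∧
      ∫ x, |v ^ 2 - u * x| ^ s * ‖φ x‖ ≤
        C * (|u| ^ s + |u| ^ (s - max s 0) * |v| ^ (2 * max s 0)) := by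
  obtain ⟨C, hC, hφ⟩ := φ.exists_integral_norm_comp_add_mul_abs_rpow_le hs
  refine ⟨C, hC, fun u v hu => ?_⟩
  set c := v ^ 2 / u
  obtain ⟨hint, hle⟩ := hφ c
  have hsub : (fun x => |v ^ 2 - u * x| ^ s * ‖φ x‖) =
      fun x => |u| ^ s * (‖φ (x - c + c)‖ * |x - c| ^ s) := by
    ext x
    rw [abs_sq_sub_mul_eq hu, mul_rpow (abs_nonneg _) (abs_nonneg _), sub_add_cancel]
    ring
  rw [hsub]
  refine ⟨(hint.comp_sub_right c).const_mul _, ?_⟩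
  rw [integral_const_mul, integral_sub_right_eq_self (fun y => ‖φ (y + c)‖ * |y| ^ s)]
  calc |u| ^ s * ∫ y, ‖φ (y + c)‖ * |y| ^ s ≤ |u| ^ s * (C * (1 + |c| ^ max s 0)) := by gcongr
    _ = _ := by linear_combination C * abs_rpow_mul_abs_sq_div_rpow hu v s (max s 0)

lemma integrable_abs_rpow_mul_abs_sq_sub_mul_rpow_mul (φ₁ φ₂ φ₃ : 𝓢(ℝ, F)) {t₁ t₂ : ℝ}
    (ht₁ : 0 < t₁) (ht₂ : 0 < t₂) (ht : 1 < t₁ + t₂) :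
    Integrable fun x : ℝ × ℝ × ℝ =>
      |x.1| ^ (t₁ - 1) * |x.2.1 ^ 2 - x.1 * x.2.2| ^ (t₂ - 1) *
        (‖φ₁ x.1‖ * ‖φ₂ x.2.1‖ * ‖φ₃ x.2.2‖) := by
  set f := fun x : ℝ × ℝ × ℝ =>
    |x.1| ^ (t₁ - 1) * |x.2.1 ^ 2 - x.1 * x.2.2| ^ (t₂ - 1) * (‖φ₁ x.1‖ * ‖φ₂ x.2.1‖ * ‖φ₃ x.2.2‖)
  set p := max (t₂ - 1) 0
  obtain ⟨C, -, hφ₃⟩ :=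
    φ₃.exists_integral_abs_sq_sub_mul_rpow_mul_norm_le (s := t₂ - 1) (by linarith)
  have hp : -1 < t₁ + t₂ - 2 - p := by
    rcases max_cases (t₂ - 1) 0 with ⟨h, -⟩ | ⟨h, -⟩ <;> simp only [p, h] <;> linarith
  set H := fun z : ℝ × ℝ => C * (‖φ₁ z.1‖ * |z.1| ^ (t₁ + t₂ - 2) * ‖φ₂ z.2‖ +
    ‖φ₁ z.1‖ * |z.1| ^ (t₁ + t₂ - 2 - p) * (‖φ₂ z.2‖ * |z.2| ^ (2 * p)))
  have hH : Integrable H :=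
    (((φ₁.integrable_norm_mul_abs_rpow (by linarith)).mul_prod φ₂.integrable.norm).add
      ((φ₁.integrable_norm_mul_abs_rpow hp).mul_prod
        (φ₂.integrable_norm_mul_abs_rpow (by linarith [le_max_right (t₂ - 1) 0])))).const_mul C
  have hfiber : ∀ z : ℝ × ℝ, z.1 ≠ 0 →
      ∫⁻ x₂, ENNReal.ofReal (f (z.1, z.2, x₂)) ≤ ENNReal.ofReal (H z) := by
    rintro ⟨x₁, x₁₂⟩ (hx₁ : x₁ ≠ 0)
    have hx₁' : 0 < |x₁| := abs_pos.2 hx₁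
    set k := |x₁| ^ (t₁ - 1) * (‖φ₁ x₁‖ * ‖φ₂ x₁₂‖)
    obtain ⟨hint, hle⟩ := hφ₃ x₁ x₁₂ hx₁
    have hf : ∀ x₂, f (x₁, x₁₂, x₂) = k * (|x₁₂ ^ 2 - x₁ * x₂| ^ (t₂ - 1) * ‖φ₃ x₂‖) := by
      intro x₂
      simp only [f, k]
      ring
    have hexp₁ : |x₁| ^ (t₁ + t₂ - 2) = |x₁| ^ (t₁ - 1) * |x₁| ^ (t₂ - 1) := by
      rw [← rpow_add hx₁']; ring_nf
    have hexp₂ : |x₁| ^ (t₁ + t₂ - 2 - p) = |x₁| ^ (t₁ - 1) * |x₁| ^ (t₂ - 1 - p) := by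
      rw [← rpow_add hx₁']; ring_nf
    calc ∫⁻ x₂, ENNReal.ofReal (f (x₁, x₁₂, x₂))
        = ENNReal.ofReal (∫ x₂, k * (|x₁₂ ^ 2 - x₁ * x₂| ^ (t₂ - 1) * ‖φ₃ x₂‖)) := by
          simp_rw [hf]
          exact (ofReal_integral_eq_lintegral_ofReal (hint.const_mul k)
            (ae_of_all _ fun _ => by positivity)).symm
      _ ≤ ENNReal.ofReal (k * (C * (|x₁| ^ (t₂ - 1) + |x₁| ^ (t₂ - 1 - p) * |x₁₂| ^ (2 * p)))) := by
          rw [integral_const_mul]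
          gcongr
      _ = ENNReal.ofReal (H (x₁, x₁₂)) := by
          simp only [H, k, hexp₁, hexp₂]
          ring_nf
  have hmeas : Measurable f :=
    (by fun_prop : Measurable fun x : ℝ × ℝ × ℝ =>
      |x.1| ^ (t₁ - 1) * |x.2.1 ^ 2 - x.1 * x.2.2| ^ (t₂ - 1)).mul
    (by fun_prop : Continuous fun x : ℝ × ℝ × ℝ => ‖φ₁ x.1‖ * ‖φ₂ x.2.1‖ * ‖φ₃ x.2.2‖).measurable
  exact integrable_prod_prod_of_ae_lintegral_le hmeas.aestronglyMeasurable
    (ae_of_all _ fun x => by positivity) hH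
    ((Measure.quasiMeasurePreserving_fst.ae (Measure.ae_ne volume 0)).mono hfiber)

end SchwartzMap

/-- Lemma 3.1 of the paper, real place: elementary bounds for
`∫ |φ(y+a)| |y|^{t₂-1} dy` for Schwartz `φ`, and the resulting absolute
convergence of the archimedean local zeta integral
`∫_{ℝ³} |x₁|^{t₁-1} |x₁₂² - x₁x₂|^{t₂-1} |φ₁(x₁)φ₂(x₁₂)φ₃(x₂)| dx`
for `t₁ > 1/2`, `t₂ > 0`, `t₁ + t₂/2 > 1`. -/
theorem stmt_16 :
    -- (a) uniform bound for bounded shifts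
    (∀ (φ : SchwartzMap ℝ ℂ) (M t₂ : ℝ), 0 < t₂ → ∃ C : ℝ, ∀ a : ℝ, |a| ≤ M →
      (∫ y : ℝ, ‖φ (y + a)‖ * |y| ^ (t₂ - 1)) ≤ C) ∧
    -- (b) bounds for large shifts
    (∀ (φ : SchwartzMap ℝ ℂ) (M t₂ : ℝ), 0 < M → 0 < t₂ → ∃ C : ℝ, ∀ a : ℝ, M ≤ |a| →
      (1 ≤ t₂ →
        (∫ y : ℝ, ‖φ (y + a)‖ * |y| ^ (t₂ - 1)) ≤ C * (1 + |a| ^ (t₂ - 1 / 2))) ∧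
      (t₂ ≤ 1 →
        (∫ y : ℝ, ‖φ (y + a)‖ * |y| ^ (t₂ - 1)) ≤ C * (1 + |a| ^ (t₂ / 2)))) ∧
    -- consequence: convergence of the local zeta integral
    (∀ (φ₁ φ₂ φ₃ : SchwartzMap ℝ ℂ) (t₁ t₂ : ℝ),
      1 / 2 < t₁ → 0 < t₂ → 1 < t₁ + t₂ / 2 →
      Integrable (fun x : ℝ × ℝ × ℝ =>
        |x.1| ^ (t₁ - 1) * |x.2.1 ^ 2 - x.1 * x.2.2| ^ (t₂ - 1) *
          (‖φ₁ x.1‖ * ‖φ₂ x.2.1‖ * ‖φ₃ x.2.2‖))) := by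
  refine ⟨fun φ M t₂ ht₂ => φ.exists_integral_norm_comp_add_mul_abs_rpow_le_of_abs_le M ht₂,
    fun φ M t₂ hM ht₂ => ?_, fun φ₁ φ₂ φ₃ t₁ t₂ ht₁ ht₂ ht =>
      SchwartzMap.integrable_abs_rpow_mul_abs_sq_sub_mul_rpow_mul φ₁ φ₂ φ₃ (by linarith) ht₂
        (by linarith)⟩
  obtain ⟨C₁, hC₁⟩ := φ.exists_integral_norm_comp_add_mul_abs_rpow_le_of_le_abs hM ht₂
  by_cases ht₂₁ : t₂ ≤ 1
  · obtain ⟨C₂, hC₂⟩ := φ.exists_integral_norm_comp_add_mul_abs_rpow_le_of_le_one ht₂ ht₂₁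
    refine ⟨max C₁ C₂, fun a ha => ⟨fun _ => (hC₁ a ha).trans ?_, fun _ => (hC₂ a).trans ?_⟩⟩ <;>
      gcongr
    exacts [le_max_left _ _, le_max_right _ _]
  · exact ⟨C₁, fun a ha => ⟨fun _ => hC₁ a ha, fun h => absurd h ht₂₁⟩⟩
end
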